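/- Let n ≥ 2 be an integer, μ ∈ (0,1), and V_μ = {x ∈ ℝⁿ : (x₁, x₂) = (r cos θ, r sin θ) with r > 0, θ ∈ (0, μπ)}. Let h ∈ C²((0, μπ)) with h > 0, and define f : V_μ → ℝ by f(x) = r h(θ), where (r, θ) are the polar coordinates of (x₁, x₂). Then f satisfies Δf − (∂_i f ∂_j f ∂_{ij} f)/(1 + |∇f|²) + n/f = 0 in V_μ if and only if h(1+h²)(h''+h) + n(1 + h² + (h')²) = 0 on (0, μπ). -/

import Mathlib

open scoped BigOperators RealInnerProductSpace
open Metric Filter Topology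

noncomputable section

/-- The partial derivative `∂_i f` at `x`. -/
def pd (n : ℕ) (f : EuclideanSpace ℝ (Fin n) → ℝ) (i : Fin n)
    (x : EuclideanSpace ℝ (Fin n)) : ℝ :=
  fderiv ℝ f x (EuclideanSpace.single i 1)

/-- The second partial derivative `∂_{ij} f` at `x`. -/
def pd2 (n : ℕ) (f : EuclideanSpace ℝ (Fin n) → ℝ) (i j : Fin n)
    (x : EuclideanSpace ℝ (Fin n)) : ℝ :=
  pd n (pd n f i) j x

/-- The minimal graph equation `Δf − (∂_i f ∂_j f ∂_{ij} f)/(1+|∇f|²) + n/f = 0` at `x`. -/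
def MinGraphEq (n : ℕ) (f : EuclideanSpace ℝ (Fin n) → ℝ)
    (x : EuclideanSpace ℝ (Fin n)) : Prop :=
  (∑ i, pd2 n f i i x)
    - (∑ i, ∑ j, pd n f i x * pd n f j x * pd2 n f i j x) / (1 + ∑ i, (pd n f i x) ^ 2)
    + (n : ℝ) / f x = 0

/-- `f` is a solution of the minimal graph equation in `Ω`:
`f ∈ C(cl Ω) ∩ C^∞(Ω)`, `f > 0` in `Ω`, `f = 0` on `∂Ω`, and the PDE holds in `Ω`. -/
def IsMinSol (n : ℕ) (Ω : Set (EuclideanSpace ℝ (Fin n)))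
    (f : EuclideanSpace ℝ (Fin n) → ℝ) : Prop :=
  ContinuousOn f (closure Ω) ∧ ContDiffOn ℝ (⊤ : ℕ∞) f Ω ∧ (∀ x ∈ Ω, 0 < f x) ∧
    (∀ x ∈ frontier Ω, f x = 0) ∧ ∀ x ∈ Ω, MinGraphEq n f x

/-- The planar wedge `{x : (x₁,x₂) = (r cos θ, r sin θ), r > 0, θ ∈ (0, μπ)} ⊂ ℝⁿ`. -/
def wedge (n : ℕ) (hn : 2 ≤ n) (μ : ℝ) : Set (EuclideanSpace ℝ (Fin n)) :=
  {x | ∃ r : ℝ, 0 < r ∧ ∃ θ ∈ Set.Ioo 0 (μ * Real.pi),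
      x ⟨0, by omega⟩ = r * Real.cos θ ∧ x ⟨1, by omega⟩ = r * Real.sin θ}

/-! In polar coordinates `(r, θ)` of the `(x₁, x₂)`-plane, `f = r h(θ)` has gradient
`(h cos θ - h' sin θ, h sin θ + h' cos θ, 0, …)`, which depends on `θ` alone. Differentiating it
along `∇θ = (-sin θ, cos θ) / r` shows that the Hessian is `(h'' + h) / r` times the projection
onto `(-sin θ, cos θ)`. Hence `Δf = (h'' + h) / r`, `|∇f|² = h² + h'²` and
`∂_i f ∂_j f ∂_{ij} f = (h'' + h) h'² / r`, so the left side of the equation equals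
`(h (1 + h²) (h'' + h) + n (1 + h² + h'²)) / (r h (1 + h² + h'²))`. Every angle in `(0, μπ)` is
attained in `V_μ`. -/

open Real

namespace PlanarPolar

variable {E : Type*} [NormedAddCommGroup E] [NormedSpace ℝ E] (u v : E →L[ℝ] ℝ)

def radius (x : E) : ℝ := √(u x ^ 2 + v x ^ 2)

def angle (x : E) : ℝ := arccos (u x / radius u v x)

variable {u v} {x : E}

theorem radius_sq (x : E) : radius u v x ^ 2 = u x ^ 2 + v x ^ 2 :=
  sq_sqrt (by positivity)

theorem radius_pos (hx : 0 < v x) : 0 < radius u v x :=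
  sqrt_pos.mpr (by positivity)

theorem abs_div_radius_lt_one (hx : 0 < v x) : |u x / radius u v x| < 1 := by
  have hr := radius_pos (u := u) hx
  rw [abs_div, abs_of_pos hr, div_lt_one hr]
  exact abs_lt_of_sq_lt_sq (by rw [radius_sq]; linarith [pow_pos hx 2]) hr.le

theorem cos_angle (hx : 0 < v x) : cos (angle u v x) = u x / radius u v x := by
  have := abs_lt.mp (abs_div_radius_lt_one (u := u) hx)
  exact cos_arccos this.1.le this.2.le

theorem sin_angle (hx : 0 < v x) : sin (angle u v x) = v x / radius u v x := by
  have hr := radius_pos (u := u) hx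
  have h : 1 - (u x / radius u v x) ^ 2 = (v x / radius u v x) ^ 2 := by
    field_simp; linarith [radius_sq (u := u) (v := v) x]
  rw [angle, sin_arccos, h, sqrt_sq (by positivity)]

theorem radius_eq_of_polar {ρ t : ℝ} (hρ : 0 ≤ ρ) (hu : u x = ρ * cos t)
    (hv : v x = ρ * sin t) : radius u v x = ρ := by
  rw [radius, hu, hv, show (ρ * cos t) ^ 2 + (ρ * sin t) ^ 2 = ρ ^ 2 by
    linear_combination ρ ^ 2 * cos_sq_add_sin_sq t, sqrt_sq hρ]

theorem angle_eq_of_polar {ρ t : ℝ} (hρ : 0 < ρ) (ht : t ∈ Set.Icc 0 π)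
    (hu : u x = ρ * cos t) (hv : v x = ρ * sin t) : angle u v x = t := by
  rw [angle, radius_eq_of_polar hρ.le hu hv, hu, mul_div_cancel_left₀ _ hρ.ne',
    arccos_cos ht.1 ht.2]

theorem hasFDerivAt_radius (hx : 0 < v x) :
    HasFDerivAt (radius u v) (cos (angle u v x) • u + sin (angle u v x) • v) x := by
  have hsq : HasFDerivAt (fun y => u y ^ 2 + v y ^ 2) ((2 * u x) • u + (2 * v x) • v) x := by
    refine ((u.hasFDerivAt.pow 2).add (v.hasFDerivAt.pow 2)).congr_fderiv ?_
    ext y; simp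
  refine (hsq.sqrt (by positivity)).congr_fderiv ?_
  rw [cos_angle hx, sin_angle hx]
  ext y
  simp only [one_div, mul_inv_rev, smul_add, add_apply, smul_apply, smul_eq_mul]
  rw [show √(u x ^ 2 + v x ^ 2) = radius u v x from rfl]
  field_simp

theorem hasFDerivAt_angle (hx : 0 < v x) :
    HasFDerivAt (angle u v)
      ((radius u v x)⁻¹ • (-sin (angle u v x) • u + cos (angle u v x) • v)) x := by
  have hr := radius_pos (u := u) hx
  have hq := u.hasFDerivAt.mul ((hasDerivAt_inv hr.ne').comp_hasFDerivAt x (hasFDerivAt_radius hx))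
  have h1 := abs_lt.mp (abs_div_radius_lt_one (u := u) hx)
  have h2 : √(1 - (u x * (radius u v x)⁻¹) ^ 2) = v x / radius u v x := by
    rw [← div_eq_mul_inv, ← sin_arccos, ← angle, sin_angle hx]
  rw [div_eq_mul_inv] at h1
  rw [cos_angle hx, sin_angle hx] at hq ⊢
  have hfun : angle u v = arccos ∘ (⇑u * (fun y => y⁻¹) ∘ radius u v) := by
    funext y; simp [angle, div_eq_mul_inv]
  rw [hfun]
  refine ((hasDerivAt_arccos h1.1.ne' h1.2.ne).comp_hasFDerivAt x hq).congr_fderiv ?_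
  rw [h2]
  ext y
  simp only [smul_add, neg_smul, smul_neg, Function.comp_apply, add_apply, smul_apply,
    smul_eq_mul, neg_apply]
  field_simp
  linear_combination (-u y) * radius_sq (u := u) (v := v) x

theorem hasFDerivAt_comp_angle {φ : ℝ → ℝ} {φ' : ℝ} (hx : 0 < v x)
    (hφ : HasDerivAt φ φ' (angle u v x)) :
    HasFDerivAt (fun y => φ (angle u v y))
      ((-φ' * sin (angle u v x) / radius u v x) • u
        + (φ' * cos (angle u v x) / radius u v x) • v) x := by
  refine (hφ.comp_hasFDerivAt x (hasFDerivAt_angle hx)).congr_fderiv ?_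
  ext y
  simp only [smul_add, add_apply, smul_apply, smul_eq_mul]
  ring

/-- The components along `(u, v)` of `∇(radius u v * h ∘ angle u v)`, as functions of the angle:
the vector `(h, h')` rotated by that angle. -/
def homGrad₁ (h : ℝ → ℝ) (t : ℝ) : ℝ := h t * cos t - deriv h t * sin t

def homGrad₂ (h : ℝ → ℝ) (t : ℝ) : ℝ := h t * sin t + deriv h t * cos t

section Profile

variable {h : ℝ → ℝ} {t : ℝ}

theorem hasDerivAt_homGrad₁ (h1 : DifferentiableAt ℝ h t)
    (h2 : DifferentiableAt ℝ (deriv h) t) :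
    HasDerivAt (homGrad₁ h) (-(deriv (deriv h) t + h t) * sin t) t := by
  refine ((h1.hasDerivAt.mul (hasDerivAt_cos t)).sub
    (h2.hasDerivAt.mul (hasDerivAt_sin t))).congr_deriv ?_
  ring

theorem hasDerivAt_homGrad₂ (h1 : DifferentiableAt ℝ h t)
    (h2 : DifferentiableAt ℝ (deriv h) t) :
    HasDerivAt (homGrad₂ h) ((deriv (deriv h) t + h t) * cos t) t := by
  refine ((h1.hasDerivAt.mul (hasDerivAt_sin t)).add
    (h2.hasDerivAt.mul (hasDerivAt_cos t))).congr_deriv ?_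
  ring

theorem hasFDerivAt_radius_mul_comp_angle (hx : 0 < v x)
    (hh : DifferentiableAt ℝ h (angle u v x)) :
    HasFDerivAt (fun y => radius u v y * h (angle u v y))
      (homGrad₁ h (angle u v x) • u + homGrad₂ h (angle u v x) • v) x := by
  have hr := (radius_pos (u := u) hx).ne'
  refine ((hasFDerivAt_radius hx).mul (hasFDerivAt_comp_angle hx hh.hasDerivAt)).congr_fderiv ?_
  ext y
  simp only [homGrad₁, homGrad₂, smul_add, add_apply, smul_apply, smul_eq_mul]
  field_simp
  ring

end Profile

end PlanarPolar

open PlanarPolar EuclideanSpace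

theorem ansatz_expression_eq_zero_iff {r s c h₀ h₁ h₂ N p₁ p₂ H₁₁ H₁₂ H₂₁ H₂₂ F : ℝ}
    (hr : r ≠ 0) (hh₀ : h₀ ≠ 0) (hsc : s ^ 2 + c ^ 2 = 1)
    (hp₁ : p₁ = h₀ * c - h₁ * s) (hp₂ : p₂ = h₀ * s + h₁ * c)
    (hH₁₁ : H₁₁ = (h₂ + h₀) / r * s ^ 2) (hH₁₂ : H₁₂ + H₂₁ = -2 * ((h₂ + h₀) / r * s * c))
    (hH₂₂ : H₂₂ = (h₂ + h₀) / r * c ^ 2) (hF : F = r * h₀) :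
    H₁₁ + H₂₂ - (p₁ ^ 2 * H₁₁ + p₁ * p₂ * (H₁₂ + H₂₁) + p₂ ^ 2 * H₂₂) / (1 + (p₁ ^ 2 + p₂ ^ 2))
        + N / F = 0 ↔
      h₀ * (1 + h₀ ^ 2) * (h₂ + h₀) + N * (1 + h₀ ^ 2 + h₁ ^ 2) = 0 := by
  set K := (h₂ + h₀) / r with hK
  have htrace : H₁₁ + H₂₂ = K := by rw [hH₁₁, hH₂₂]; linear_combination K * hsc
  have hnorm : p₁ ^ 2 + p₂ ^ 2 = h₀ ^ 2 + h₁ ^ 2 := by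
    rw [hp₁, hp₂]; linear_combination (h₀ ^ 2 + h₁ ^ 2) * hsc
  have hquad : p₁ ^ 2 * H₁₁ + p₁ * p₂ * (H₁₂ + H₂₁) + p₂ ^ 2 * H₂₂ = K * h₁ ^ 2 := by
    have hang : p₁ * s - p₂ * c = -h₁ := by rw [hp₁, hp₂]; linear_combination (-h₁) * hsc
    calc _ = K * (p₁ * s - p₂ * c) ^ 2 := by rw [hH₁₁, hH₁₂, hH₂₂]; ring
      _ = K * h₁ ^ 2 := by rw [hang, neg_sq]
  have hD : r * h₀ * (1 + h₀ ^ 2 + h₁ ^ 2) ≠ 0 := by positivity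
  have hexpr : K - K * h₁ ^ 2 / (1 + (h₀ ^ 2 + h₁ ^ 2)) + N / (r * h₀)
      = (h₀ * (1 + h₀ ^ 2) * (h₂ + h₀) + N * (1 + h₀ ^ 2 + h₁ ^ 2))
        / (r * h₀ * (1 + h₀ ^ 2 + h₁ ^ 2)) := by
    rw [hK]; field_simp; ring
  rw [htrace, hquad, hnorm, hF, hexpr, div_eq_zero_iff, or_iff_left hD]

section Euclidean

variable {n : ℕ} {a b : Fin n}

theorem pd_eq_of_hasFDerivAt (hab : a ≠ b) {g : EuclideanSpace ℝ (Fin n) → ℝ}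
    {y : EuclideanSpace ℝ (Fin n)} {α β : ℝ}
    (hg : HasFDerivAt g (α • proj (𝕜 := ℝ) a + β • proj b) y) (j : Fin n) :
    pd n g j y = if j = a then α else if j = b then β else 0 := by
  rw [pd, hg.fderiv]
  by_cases hja : j = a
  · subst hja; simp [hab]
  · by_cases hjb : j = b
    · subst hjb; simp [hja, Ne.symm hja]
    · simp [hja, hjb, Ne.symm hja, Ne.symm hjb]

theorem pd2_eq_of_eventuallyEq {g φ : EuclideanSpace ℝ (Fin n) → ℝ} {i j : Fin n}
    {x : EuclideanSpace ℝ (Fin n)} (hφ : pd n g i =ᶠ[𝓝 x] φ) : pd2 n g i j x = pd n φ j x := by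
  rw [pd2, pd, pd, hφ.fderiv_eq]

theorem minGraphEq_iff_of_planar (hab : a ≠ b) {g : EuclideanSpace ℝ (Fin n) → ℝ}
    {x : EuclideanSpace ℝ (Fin n)} (hpd : ∀ j, j ≠ a → j ≠ b → pd n g j x = 0)
    (hpd2 : ∀ j, j ≠ a → j ≠ b → pd2 n g j j x = 0) :
    MinGraphEq n g x ↔
      pd2 n g a a x + pd2 n g b b x
        - (pd n g a x ^ 2 * pd2 n g a a x
            + pd n g a x * pd n g b x * (pd2 n g a b x + pd2 n g b a x)
            + pd n g b x ^ 2 * pd2 n g b b x) / (1 + (pd n g a x ^ 2 + pd n g b x ^ 2))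
        + n / g x = 0 := by
  have hsum : ∀ F : Fin n → ℝ, (∀ j, j ≠ a → j ≠ b → F j = 0) → ∑ j, F j = F a + F b :=
    fun F hF => Fintype.sum_eq_add a b hab fun j hj => hF j hj.1 hj.2
  rw [MinGraphEq, hsum _ hpd2, hsum (fun j => pd n g j x ^ 2) fun j ha hb => by simp [hpd j ha hb],
    hsum _ fun i ha hb => Finset.sum_eq_zero fun j _ => by simp [hpd i ha hb]]
  rw [hsum _ fun j ha hb => by simp [hpd j ha hb], hsum _ fun j ha hb => by simp [hpd j ha hb]]
  ring_nf

theorem minGraphEq_radius_mul_comp_angle_iff (hab : a ≠ b) {U : Set ℝ} (hU : IsOpen U)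
    {h : ℝ → ℝ} (hh : ContDiffOn ℝ 2 h U) {x : EuclideanSpace ℝ (Fin n)} (hx : 0 < x b)
    {t : ℝ} (ht : angle (proj (𝕜 := ℝ) a) (proj b) x = t) (htU : t ∈ U) (hne : h t ≠ 0) :
    MinGraphEq n (fun y => radius (proj (𝕜 := ℝ) a) (proj b) y
        * h (angle (proj (𝕜 := ℝ) a) (proj b) y)) x ↔
      h t * (1 + h t ^ 2) * (deriv (deriv h) t + h t)
        + n * (1 + h t ^ 2 + deriv h t ^ 2) = 0 := by
  subst ht
  have hd1 : ∀ t ∈ U, DifferentiableAt ℝ h t := fun t ht =>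
    (hh.differentiableOn (by norm_num)).differentiableAt (hU.mem_nhds ht)
  have hd2 : ∀ t ∈ U, DifferentiableAt ℝ (deriv h) t := fun t ht =>
    ((hh.deriv_of_isOpen hU (by norm_num : (1 : WithTop ℕ∞) + 1 ≤ 2)).differentiableOn
      one_ne_zero).differentiableAt (hU.mem_nhds ht)
  have hgrad₁ := pd_eq_of_hasFDerivAt hab
    (hasFDerivAt_comp_angle hx (hasDerivAt_homGrad₁ (hd1 _ htU) (hd2 _ htU)))
  have hgrad₂ := pd_eq_of_hasFDerivAt hab
    (hasFDerivAt_comp_angle hx (hasDerivAt_homGrad₂ (hd1 _ htU) (hd2 _ htU)))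
  set θ := angle (proj (𝕜 := ℝ) a) (proj b)
  set r := radius (proj (𝕜 := ℝ) a) (proj b)
  set f := fun y => r y * h (θ y)
  have hnear : ∀ᶠ y in 𝓝 x, 0 < y b ∧ θ y ∈ U :=
    (continuousAt_const.eventually_lt (proj (𝕜 := ℝ) b).continuous.continuousAt hx).and
      ((hasFDerivAt_angle hx).continuousAt.preimage_mem_nhds (hU.mem_nhds htU))
  have hpd : ∀ᶠ y in 𝓝 x, ∀ j, pd n f j y =
      if j = a then homGrad₁ h (θ y) else if j = b then homGrad₂ h (θ y) else 0 :=
    hnear.mono fun y hy =>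
      pd_eq_of_hasFDerivAt hab (hasFDerivAt_radius_mul_comp_angle hy.1 (hd1 _ hy.2))
  have hpdA : pd n f a =ᶠ[𝓝 x] fun y => homGrad₁ h (θ y) := hpd.mono fun y hy => by simp [hy]
  have hpdB : pd n f b =ᶠ[𝓝 x] fun y => homGrad₂ h (θ y) :=
    hpd.mono fun y hy => by simp [hy, hab.symm]
  have hpdO : ∀ j, j ≠ a → j ≠ b → pd n f j =ᶠ[𝓝 x] fun _ => 0 :=
    fun j ha hb => hpd.mono fun y hy => by simp [hy, ha, hb]
  rw [minGraphEq_iff_of_planar hab (fun j ha hb => by simp [hpd.self_of_nhds j, ha, hb])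
    (fun j ha hb => by simp [pd2_eq_of_eventuallyEq (hpdO j ha hb), pd])]
  refine ansatz_expression_eq_zero_iff (radius_pos hx).ne' hne (sin_sq_add_cos_sq (θ x))
    ?_ ?_ ?_ ?_ ?_ rfl
  · simp [hpd.self_of_nhds, homGrad₁]
  · simp [hpd.self_of_nhds, homGrad₂, hab.symm]
  · rw [pd2_eq_of_eventuallyEq hpdA, hgrad₁]; simp; ring
  · rw [pd2_eq_of_eventuallyEq hpdA, pd2_eq_of_eventuallyEq hpdB, hgrad₁, hgrad₂]
    simp [hab.symm]; ring
  · rw [pd2_eq_of_eventuallyEq hpdB, hgrad₂]; simp [hab.symm]; ring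

end Euclidean

section Wedge

variable {n : ℕ} (hn : 2 ≤ n) {μ : ℝ}

theorem pos_and_angle_mem_of_mem_wedge (hμ : μ ≤ 1) {x : EuclideanSpace ℝ (Fin n)}
    (hx : x ∈ wedge n hn μ) :
    0 < x ⟨1, by omega⟩ ∧
      angle (proj (𝕜 := ℝ) ⟨0, by omega⟩) (proj ⟨1, by omega⟩) x ∈ Set.Ioo 0 (μ * π) := by
  obtain ⟨ρ, hρ, t, ht, hu, hv⟩ := hx
  have htπ : t < π := ht.2.trans_le (by nlinarith [pi_pos])
  refine ⟨hv ▸ mul_pos hρ (sin_pos_of_pos_of_lt_pi ht.1 htπ), ?_⟩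
  rwa [angle_eq_of_polar hρ ⟨ht.1.le, htπ.le⟩ hu hv]

theorem exists_mem_wedge_angle_eq (hμ : μ ≤ 1) {t : ℝ} (ht : t ∈ Set.Ioo 0 (μ * π)) :
    ∃ x ∈ wedge n hn μ, angle (proj (𝕜 := ℝ) ⟨0, by omega⟩) (proj ⟨1, by omega⟩) x = t := by
  have htπ : t < π := ht.2.trans_le (by nlinarith [pi_pos])
  set x : EuclideanSpace ℝ (Fin n) := single ⟨0, by omega⟩ (cos t) + single ⟨1, by omega⟩ (sin t)
  have hu : x ⟨0, by omega⟩ = 1 * cos t := by simp [x]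
  have hv : x ⟨1, by omega⟩ = 1 * sin t := by simp [x]
  exact ⟨x, ⟨1, one_pos, t, ht, hu, hv⟩,
    angle_eq_of_polar one_pos ⟨ht.1.le, htπ.le⟩ hu hv⟩

end Wedge

/-- In the wedge `V_μ`, the ansatz `f(x) = r h(θ)` (with `(r,θ)` the polar
coordinates of `(x₁,x₂)`, so `r = √(x₁²+x₂²)` and `θ = arccos(x₁/r)`) solves the minimal
graph equation if and only if `h` solves the ODE `h(1+h²)(h''+h) + n(1+h²+(h')²) = 0` on
`(0, μπ)`. -/
theorem stmt13 (n : ℕ) (hn : 2 ≤ n) (μ : ℝ) (hμ : μ ∈ Set.Ioo (0:ℝ) 1)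
    (h : ℝ → ℝ) (hsm : ContDiffOn ℝ 2 h (Set.Ioo 0 (μ * Real.pi)))
    (hpos : ∀ θ ∈ Set.Ioo 0 (μ * Real.pi), 0 < h θ)
    (f : EuclideanSpace ℝ (Fin n) → ℝ)
    (hf : ∀ x : EuclideanSpace ℝ (Fin n),
      f x = Real.sqrt (x ⟨0, by omega⟩ ^ 2 + x ⟨1, by omega⟩ ^ 2)
        * h (Real.arccos (x ⟨0, by omega⟩
            / Real.sqrt (x ⟨0, by omega⟩ ^ 2 + x ⟨1, by omega⟩ ^ 2)))) :
    (∀ x ∈ wedge n hn μ, MinGraphEq n f x) ↔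
      ∀ θ ∈ Set.Ioo 0 (μ * Real.pi),
        h θ * (1 + h θ ^ 2) * (deriv (deriv h) θ + h θ)
          + (n : ℝ) * (1 + h θ ^ 2 + (deriv h θ) ^ 2) = 0 := by
  have hf' : f = fun y => radius (proj (𝕜 := ℝ) ⟨0, by omega⟩) (proj ⟨1, by omega⟩) y
      * h (angle (proj (𝕜 := ℝ) ⟨0, by omega⟩) (proj ⟨1, by omega⟩) y) :=
    funext hf
  have key := fun {x} {t} (hx : x ∈ wedge n hn μ) ht htI =>
    hf' ▸ minGraphEq_radius_mul_comp_angle_iff (by simp) isOpen_Ioo hsm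
      (pos_and_angle_mem_of_mem_wedge hn hμ.2.le hx).1 ht htI (hpos t htI).ne'
  constructor
  · intro hmin t ht
    obtain ⟨x, hx, hxt⟩ := exists_mem_wedge_angle_eq hn hμ.2.le ht
    exact (key hx hxt ht).1 (hmin x hx)
  · intro hode x hx
    have hxt := (pos_and_angle_mem_of_mem_wedge hn hμ.2.le hx).2
    exact (key hx rfl hxt).2 (hode _ hxt)
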